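/- arXiv:1803.11510 — 4 statements merged into one kernel-verified Lean document; each statement's English description precedes it below -/
import Mathlib

section
/- Let d : ℕ → ℤ be a D-periodic function (d(n+D) = d(n) for all n) with D ≥ 1, let k be a natural number, α a natural number, and w > 0. Then for all complex s with Re(s) > k+1, ∑_{n=α}^∞ d(n)·n^k/(n+w)^s = D^{-s} ∑_{j=0}^{D-1} d(j+α) ∑_{ℓ=0}^{k} (k choose ℓ)·(-w)^ℓ·D^{k-ℓ}·ζ(s-k+ℓ, (j+α+w)/D), where ζ(·,·) is the Hurwitz zeta function. -/
open Complex

/-- The Hurwitz zeta function `ζ(s,a) = ∑_{t≥0} 1/(t+a)^s`, as a series (for `Re s > 1`, `a > 0`). -/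
noncomputable def hurwitzZetaSeries (s : ℂ) (a : ℝ) : ℂ :=
    ∑' t : ℕ, 1 / (((t : ℝ) + a : ℝ) : ℂ) ^ s

lemma summable_hz {a : ℝ} (ha : 0 < a) {z : ℂ} (hz : 1 < z.re) :
    Summable (fun t : ℕ => 1 / ((((t : ℝ) + a : ℝ)) : ℂ) ^ z) := by
  have h := (Real.summable_one_div_nat_add_rpow a z.re).mpr hz
  apply Summable.of_norm
  refine h.congr fun t => ?_
  have hpos : (0 : ℝ) < (t : ℝ) + a := by positivity
  rw [norm_div, norm_one, Complex.norm_cpow_eq_rpow_re_of_pos hpos,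
    abs_of_pos hpos]

/-- A Dirichlet series with `D`-periodic coefficients times `n^k` is a finite linear
combination of Hurwitz zeta functions (the main computation in Theorem 1.1). -/
theorem periodic_dirichlet_eq_hurwitz (D : ℕ) (hD : 1 ≤ D) (d : ℕ → ℤ)
    (hper : ∀ n, d (n + D) = d n) (k α : ℕ) (w : ℝ) (hw : 0 < w)
    (s : ℂ) (hs : (k + 1 : ℝ) < s.re) :
    ∑' n : ℕ, (d (n + α) : ℂ) * ((n + α : ℕ) : ℂ) ^ k
        / ((((n + α : ℕ) : ℝ) + w : ℝ) : ℂ) ^ s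
      = (D : ℂ) ^ (-s) * ∑ j ∈ Finset.range D, (d (j + α) : ℂ) *
          ∑ ℓ ∈ Finset.range (k + 1), (k.choose ℓ : ℂ) * (-(w : ℂ)) ^ ℓ * (D : ℂ) ^ (k - ℓ) *
            hurwitzZetaSeries (s - k + ℓ) (((j : ℝ) + α + w) / D) := by
  haveI : NeZero D := ⟨by omega⟩
  have hD0 : (D : ℂ) ≠ 0 := Nat.cast_ne_zero.mpr (by omega)
  have hDR : (0 : ℝ) < D := by exact_mod_cast Nat.pos_of_ne_zero (by omega)
  set f : ℕ → ℂ := fun n => (d (n + α) : ℂ) * ((n + α : ℕ) : ℂ) ^ k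
      / ((((n + α : ℕ) : ℝ) + w : ℝ) : ℂ) ^ s with hf
  -- periodicity in steps of D
  have hd : ∀ m t : ℕ, d (m + t * D) = d m := by
    intro m t
    induction t with
    | zero => simp
    | succ t ih =>
      have : m + (t + 1) * D = (m + t * D) + D := by ring
      rw [this, hper, ih]
  have hdmod : ∀ m : ℕ, d m = d (m % D) := by
    intro m
    conv_lhs => rw [← Nat.mod_add_div m D]
    rw [mul_comm]
    exact hd _ _
  -- summability of f
  have hsre : (1 : ℝ) < s.re - k := by linarith
  have hsum : Summable f := by
    apply Summable.of_norm
    set M : ℝ := ∑ i ∈ Finset.range D, (|d i| : ℝ) with hM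
    have hbound : ∀ n : ℕ, ‖f n‖ ≤ M * (1 / |(n : ℝ) + (α + w)| ^ (s.re - k)) := by
      intro n
      have hXpos : (0 : ℝ) < ((n + α : ℕ) : ℝ) + w := by positivity
      have hnorm : ‖f n‖ = |((d (n + α) : ℤ) : ℝ)| * ((n + α : ℕ) : ℝ) ^ k
          / (((n + α : ℕ) : ℝ) + w) ^ s.re := by
        simp only [hf, norm_div, norm_mul, norm_pow,
          Complex.norm_intCast, Complex.norm_natCast,
          Complex.norm_cpow_eq_rpow_re_of_pos hXpos]
      have hdle : |((d (n + α) : ℤ) : ℝ)| ≤ M := by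
        rw [hdmod (n + α)]
        exact Finset.single_le_sum (f := fun i => |((d i : ℤ) : ℝ)|)
          (fun i _ => abs_nonneg _)
          (Finset.mem_range.mpr (Nat.mod_lt _ (by omega : 0 < D)))
      have hXk : ((n + α : ℕ) : ℝ) ^ k ≤ (((n + α : ℕ) : ℝ) + w) ^ k := by
        apply pow_le_pow_left₀ (by positivity)
        linarith
      have habs : |(n : ℝ) + (α + w)| = ((n + α : ℕ) : ℝ) + w := by
        rw [abs_of_pos (by positivity)]
        push_cast
        ring
      calc ‖f n‖ = |((d (n + α) : ℤ) : ℝ)| * ((n + α : ℕ) : ℝ) ^ k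
            / (((n + α : ℕ) : ℝ) + w) ^ s.re := hnorm
        _ ≤ M * ((((n + α : ℕ) : ℝ) + w) ^ k) / (((n + α : ℕ) : ℝ) + w) ^ s.re := by
            gcongr
        _ = M * (1 / |(n : ℝ) + (α + w)| ^ (s.re - k)) := by
            rw [mul_div_assoc]
            congr 1
            rw [habs, one_div, ← Real.rpow_neg hXpos.le, neg_sub,
              ← Real.rpow_natCast (((n + α : ℕ) : ℝ) + w) k, ← Real.rpow_sub hXpos]
    refine Summable.of_nonneg_of_le (fun n => norm_nonneg _) hbound ?_
    exact ((Real.summable_one_div_nat_add_rpow (α + w) (s.re - k)).mpr hsre).mul_left M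
  -- key pointwise binomial identity
  have hsne : ∀ X : ℝ, 0 < X → ((X : ℝ) : ℂ) ^ s ≠ 0 := by
    intro X hX
    simp [Complex.cpow_eq_zero_iff, Complex.ofReal_ne_zero.mpr hX.ne']
  have key : ∀ X : ℝ, 0 < X → ∀ n : ℕ, (n : ℝ) = X - w →
      ((n : ℕ) : ℂ) ^ k / ((X : ℝ) : ℂ) ^ s
        = ∑ ℓ ∈ Finset.range (k + 1),
            (k.choose ℓ : ℂ) * (-(w : ℂ)) ^ ℓ * ((X : ℝ) : ℂ) ^ (((k - ℓ : ℕ) : ℂ) - s) := by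
    intro X hX n hn
    have hXne : ((X : ℝ) : ℂ) ≠ 0 := Complex.ofReal_ne_zero.mpr hX.ne'
    have hnc : ((n : ℕ) : ℂ) = ((X : ℝ) : ℂ) - (w : ℂ) := by
      rw [← Complex.ofReal_natCast, hn]
      push_cast
      ring
    rw [hnc]
    have hbin : (((X : ℝ) : ℂ) - (w : ℂ)) ^ k
        = ∑ ℓ ∈ Finset.range (k + 1),
            (-(w : ℂ)) ^ ℓ * ((X : ℝ) : ℂ) ^ (k - ℓ) * (k.choose ℓ : ℂ) := by
      rw [← add_pow]
      ring_nf
    rw [hbin, Finset.sum_div]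
    refine Finset.sum_congr rfl fun ℓ hℓ => ?_
    rw [Complex.cpow_sub _ _ hXne, Complex.cpow_natCast]
    field_simp [hsne X hX]
  -- split by residue classes
  rw [Nat.sumByResidueClasses hsum D]
  -- inner sum computation for each residue class
  have inner : ∀ j : ℕ, j < D →
      ∑' t : ℕ, f (j + D * t)
        = (d (j + α) : ℂ) * ∑ ℓ ∈ Finset.range (k + 1),
            (k.choose ℓ : ℂ) * (-(w : ℂ)) ^ ℓ * (D : ℂ) ^ (((k - ℓ : ℕ) : ℂ) - s) *
              hurwitzZetaSeries (s - k + ℓ) (((j : ℝ) + α + w) / D) := by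
    intro j hj
    set a : ℝ := ((j : ℝ) + α + w) / D with ha
    have ha0 : 0 < a := by positivity
    have hzre : ∀ ℓ : ℕ, 1 < (s - k + ℓ).re := by
      intro ℓ
      simp only [Complex.add_re, Complex.sub_re, Complex.natCast_re]
      have : (0 : ℝ) ≤ ℓ := Nat.cast_nonneg ℓ
      linarith
    have hpt : ∀ t : ℕ, f (j + D * t)
        = (d (j + α) : ℂ) * ∑ ℓ ∈ Finset.range (k + 1),
            ((k.choose ℓ : ℂ) * (-(w : ℂ)) ^ ℓ * (D : ℂ) ^ (((k - ℓ : ℕ) : ℂ) - s)) *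
              (1 / ((((t : ℝ) + a : ℝ)) : ℂ) ^ (s - k + ℓ)) := by
      intro t
      have hdcoef : d (j + D * t + α) = d (j + α) := by
        have : j + D * t + α = (j + α) + t * D := by ring
        rw [this, hd]
      have hXpos : (0 : ℝ) < ((j + D * t + α : ℕ) : ℝ) + w := by positivity
      have hXn : ((j + D * t + α : ℕ) : ℝ) = (((j + D * t + α : ℕ) : ℝ) + w) - w := by ring
      rw [hf]
      simp only
      rw [mul_div_assoc, hdcoef, key _ hXpos _ hXn]
      congr 1
      refine Finset.sum_congr rfl fun ℓ hℓ => ?_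
      have hfact : (((j + D * t + α : ℕ) : ℝ) + w) = (D : ℝ) * ((t : ℝ) + a) := by
        rw [ha]
        push_cast
        field_simp
        ring
      rw [hfact]
      have hsplit : (((D : ℝ) * ((t : ℝ) + a) : ℝ) : ℂ) ^ (((k - ℓ : ℕ) : ℂ) - s)
          = (((D : ℝ) : ℝ) : ℂ) ^ (((k - ℓ : ℕ) : ℂ) - s)
            * ((((t : ℝ) + a : ℝ)) : ℂ) ^ (((k - ℓ : ℕ) : ℂ) - s) := by
        rw [Complex.ofReal_mul]
        exact Complex.mul_cpow_ofReal_nonneg (by positivity) (by positivity) _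
      rw [hsplit]
      have hℓk : ℓ ≤ k := Nat.lt_succ_iff.mp (Finset.mem_range.mp hℓ)
      have hcast : ((k - ℓ : ℕ) : ℂ) = (k : ℂ) - (ℓ : ℂ) := by
        push_cast [Nat.cast_sub hℓk]
        ring
      have hneg : ((((t : ℝ) + a : ℝ)) : ℂ) ^ (((k - ℓ : ℕ) : ℂ) - s)
          = 1 / ((((t : ℝ) + a : ℝ)) : ℂ) ^ (s - k + ℓ) := by
        rw [hcast]
        have : (k : ℂ) - (ℓ : ℂ) - s = -(s - k + ℓ) := by ring
        rw [this, Complex.cpow_neg, one_div]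
      rw [hneg]
      rw [Complex.ofReal_natCast]
      ring
    rw [tsum_congr hpt, tsum_mul_left]
    congr 1
    rw [Summable.tsum_finsetSum (fun ℓ _ => (summable_hz ha0 (hzre ℓ)).mul_left _)]
    exact Finset.sum_congr rfl fun ℓ _ => by
      rw [tsum_mul_left, hurwitzZetaSeries]
  -- convert the ZMod sum to a range sum and tidy up
  have hzmodsum : ∑ j : ZMod D, ∑' t : ℕ, f ((j.val) + D * t)
      = ∑ j ∈ Finset.range D, ∑' t : ℕ, f (j + D * t) := by
    exact Finset.sum_nbij' (s := Finset.univ) (t := Finset.range D)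
      (f := fun (j : ZMod D) => ∑' t : ℕ, f (j.val + D * t))
      (g := fun (i : ℕ) => ∑' t : ℕ, f (i + D * t))
      (fun (j : ZMod D) => j.val) (fun (i : ℕ) => (i : ZMod D))
      (fun x _ => Finset.mem_range.mpr (ZMod.val_lt x))
      (fun x _ => Finset.mem_univ _)
      (fun x _ => ZMod.natCast_rightInverse x)
      (fun x hx => ZMod.val_cast_of_lt (Finset.mem_range.mp hx))
      (fun x _ => rfl)
  rw [hzmodsum]
  rw [Finset.mul_sum]
  refine Finset.sum_congr rfl fun j hj => ?_
  rw [inner j (Finset.mem_range.mp hj)]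
  have hDsplit : ∀ ℓ : ℕ, (D : ℂ) ^ (((k - ℓ : ℕ) : ℂ) - s)
      = (D : ℂ) ^ (k - ℓ : ℕ) * (D : ℂ) ^ (-s) := fun ℓ => by
    rw [sub_eq_add_neg, Complex.cpow_add _ _ hD0, Complex.cpow_natCast]
  simp only [hDsplit]
  rw [Finset.mul_sum, Finset.mul_sum, Finset.mul_sum]
  exact Finset.sum_congr rfl fun ℓ _ => by ring
end

section
/- Under the hypotheses of the previous statement (H quasi-polynomial of degree m-1 with period D for n ≥ α), the residue of the meromorphic continuation of ζ(z) := ∑_{n=0}^∞ H(n)/(n+w)^z at z = k+1, for 0 ≤ k ≤ m-1, equals (1/D)·∑_{ℓ=k}^{m-1} (ℓ choose k)·(-w)^{ℓ-k}·∑_{j=0}^{D-1} d_ℓ(j). -/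
open Complex Filter HurwitzZeta


set_option maxHeartbeats 1000000

noncomputable section ZBRaux

def ZBR_M (c : ℝ) : ℕ := ⌈c⌉₊ - 1
def ZBR_b (c : ℝ) : ℝ := c - ZBR_M c

lemma ZBR_ceil_pos {c : ℝ} (hc : 0 < c) : 1 ≤ ⌈c⌉₊ := Nat.one_le_ceil_iff.mpr hc

lemma ZBR_M_cast {c : ℝ} (hc : 0 < c) : (ZBR_M c : ℝ) = (⌈c⌉₊ : ℝ) - 1 := by
  rw [ZBR_M, Nat.cast_sub (ZBR_ceil_pos hc)]; simp

lemma ZBR_M_add_b (c : ℝ) : (ZBR_M c : ℝ) + ZBR_b c = c := by simp [ZBR_b]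

lemma ZBR_b_pos {c : ℝ} (hc : 0 < c) : 0 < ZBR_b c := by
  have h1 : (⌈c⌉₊ : ℝ) < c + 1 := Nat.ceil_lt_add_one hc.le
  have h2 := ZBR_M_cast hc
  simp only [ZBR_b, h2]; linarith

lemma ZBR_b_le_one {c : ℝ} (hc : 0 < c) : ZBR_b c ≤ 1 := by
  have h1 : c ≤ (⌈c⌉₊ : ℝ) := Nat.le_ceil c
  have h2 := ZBR_M_cast hc
  simp only [ZBR_b, h2]; linarith

/-- The meromorphic continuation of `s ↦ ∑_{q≥0} (D(q+c))^{-s}`. -/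
def ZBR_S (D : ℕ) (c : ℝ) (s : ℂ) : ℂ :=
  (D : ℂ) ^ (-s) * (hurwitzZeta (ZBR_b c) s
    - ∑ i ∈ Finset.range (ZBR_M c), ((i + ZBR_b c : ℝ) : ℂ) ^ (-s))

lemma ZBR_hasSum {D : ℕ} (hD : 0 < D) {c : ℝ} (hc : 0 < c) {s : ℂ} (hs : 1 < s.re) :
    HasSum (fun q : ℕ => ((D * (q + c) : ℝ) : ℂ) ^ (-s)) (ZBR_S D c s) := by
  have hb0 : (0:ℝ) ≤ ZBR_b c := (ZBR_b_pos hc).le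
  have h0 : HasSum (fun n : ℕ => 1 / ((n : ℂ) + (ZBR_b c : ℝ)) ^ s) (hurwitzZeta (ZBR_b c) s) :=
    hasSum_hurwitzZeta_of_one_lt_re ⟨hb0, ZBR_b_le_one hc⟩ hs
  have h1 : HasSum (fun n : ℕ => ((n + ZBR_b c : ℝ) : ℂ) ^ (-s)) (hurwitzZeta (ZBR_b c) s) :=
    h0.congr_fun fun n => by
      have : ((n + ZBR_b c : ℝ) : ℂ) = (n : ℂ) + (ZBR_b c : ℝ) := by push_cast; ring
      rw [this, cpow_neg, one_div]
  have h2 : HasSum (fun q : ℕ => ((↑(q + ZBR_M c) + ZBR_b c : ℝ) : ℂ) ^ (-s))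
      (hurwitzZeta (ZBR_b c) s - ∑ i ∈ Finset.range (ZBR_M c), ((i + ZBR_b c : ℝ) : ℂ) ^ (-s)) := by
    refine (hasSum_nat_add_iff (f := fun n : ℕ => ((n + ZBR_b c : ℝ) : ℂ) ^ (-s)) (ZBR_M c)).mpr ?_
    convert h1 using 1
    rfl
    abel
  have h4 : HasSum (fun q : ℕ => ((q + c : ℝ) : ℂ) ^ (-s))
      (hurwitzZeta (ZBR_b c) s - ∑ i ∈ Finset.range (ZBR_M c), ((i + ZBR_b c : ℝ) : ℂ) ^ (-s)) :=
    h2.congr_fun fun q => by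
      congr 2
      push_cast
      have := ZBR_M_add_b c
      linarith
  refine (h4.mul_left ((D : ℂ) ^ (-s))).congr_fun fun q => ?_
  have hqc : (0:ℝ) ≤ q + c := (add_pos_of_nonneg_of_pos (Nat.cast_nonneg q) hc).le
  rw [ofReal_mul, mul_cpow_ofReal_nonneg (Nat.cast_nonneg D) hqc]
  norm_num

lemma ZBR_diff_cpow {b : ℂ} (hb : b ≠ 0) {g : ℂ → ℂ} (hg : Differentiable ℂ g) :
    Differentiable ℂ (fun z => b ^ g z) := by
  simp only [Complex.cpow_def_of_ne_zero hb]
  exact (hg.const_mul _).cexp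

lemma ZBR_S_diff {D : ℕ} (hD : 0 < D) {c : ℝ} (hc : 0 < c) {s : ℂ} (hs : s ≠ 1) :
    DifferentiableAt ℂ (ZBR_S D c) s := by
  have hDne : (D : ℂ) ≠ 0 := Nat.cast_ne_zero.mpr hD.ne'
  refine DifferentiableAt.mul ?_ (DifferentiableAt.sub ?_ ?_)
  · exact (ZBR_diff_cpow hDne (differentiable_neg)) s
  · exact (differentiableAt_hurwitzZeta _ hs).comp s differentiableAt_id
  · refine DifferentiableAt.fun_sum fun i _ => ?_
    have : ((i + ZBR_b c : ℝ) : ℂ) ≠ 0 := by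
      rw [ofReal_ne_zero]
      exact (add_pos_of_nonneg_of_pos (Nat.cast_nonneg i) (ZBR_b_pos hc)).ne'
    exact (ZBR_diff_cpow this differentiable_neg) s

lemma ZBR_S_residue {D : ℕ} (hD : 0 < D) {c : ℝ} (hc : 0 < c) :
    Tendsto (fun s => (s - 1) * ZBR_S D c s) (nhdsWithin 1 {(1:ℂ)}ᶜ) (nhds ((D : ℂ)⁻¹)) := by
  have hDne : (D : ℂ) ≠ 0 := Nat.cast_ne_zero.mpr hD.ne'
  have hcont : ContinuousAt (fun s : ℂ => (D : ℂ) ^ (-s)) 1 :=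
    ((ZBR_diff_cpow hDne differentiable_neg).continuous).continuousAt
  have h1 : Tendsto (fun s : ℂ => (D : ℂ) ^ (-s) * ((s - 1) * hurwitzZeta (ZBR_b c) s))
      (nhdsWithin 1 {(1:ℂ)}ᶜ) (nhds ((D:ℂ)^(-(1:ℂ)) * 1)) :=
    (hcont.tendsto.mono_left nhdsWithin_le_nhds).mul (hurwitzZeta_residue_one _)
  have h2 : Tendsto (fun s : ℂ => (s - 1) * ((D : ℂ) ^ (-s) *
        ∑ i ∈ Finset.range (ZBR_M c), ((i + ZBR_b c : ℝ) : ℂ) ^ (-s)))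
      (nhdsWithin 1 {(1:ℂ)}ᶜ) (nhds 0) := by
    have hc2 : ContinuousAt (fun s : ℂ => (D : ℂ) ^ (-s) *
        ∑ i ∈ Finset.range (ZBR_M c), ((i + ZBR_b c : ℝ) : ℂ) ^ (-s)) 1 := by
      have hdsum : Differentiable ℂ (fun s : ℂ =>
          ∑ i ∈ Finset.range (ZBR_M c), ((i + ZBR_b c : ℝ) : ℂ) ^ (-s)) := by
        refine Differentiable.fun_sum fun i _ => ?_
        have : ((i + ZBR_b c : ℝ) : ℂ) ≠ 0 := by
          rw [ofReal_ne_zero]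
          exact (add_pos_of_nonneg_of_pos (Nat.cast_nonneg i) (ZBR_b_pos hc)).ne'
        exact ZBR_diff_cpow this differentiable_neg
      exact ContinuousAt.mul hcont hdsum.continuous.continuousAt
    have hsub : Tendsto (fun s : ℂ => s - 1) (nhds 1) (nhds 0) := by
      have h := ((continuous_id (X := ℂ)).sub (continuous_const (y := (1:ℂ)))).tendsto (1:ℂ)
      simpa [Pi.sub_def] using h
    have h := hsub.mul hc2.tendsto
    rw [zero_mul] at h
    exact h.mono_left nhdsWithin_le_nhds
  have h3 := h1.sub h2
  have : (D:ℂ)^(-(1:ℂ)) * 1 - 0 = (D:ℂ)⁻¹ := by simp [cpow_neg, cpow_one]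
  rw [this] at h3
  refine h3.congr fun s => ?_
  simp only [ZBR_S]
  ring

end ZBRaux

noncomputable section ZBRmain

/-- Hurwitz parameter for residue class `r`. -/
def ZBR_c (D α : ℕ) (w : ℝ) (r : ℕ) : ℝ := (((D * α : ℕ) : ℝ) + r + w) / D

/-- The contribution of residue class `r` to the continuation. -/
def ZBR_A (m D α : ℕ) (d : ℕ → ℕ → ℤ) (w : ℝ) (z : ℂ) (r : ℕ) : ℂ :=
  ∑ ℓ ∈ Finset.range m, ∑ j ∈ Finset.range (ℓ + 1),
    ((ℓ.choose j : ℂ) * (-(w : ℂ)) ^ (ℓ - j) * (d ℓ r : ℂ)) * ZBR_S D (ZBR_c D α w r) (z - j)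

/-- The meromorphic continuation of the Barnes-type zeta function. -/
def ZBR_f (H : ℕ → ℕ) (m D α : ℕ) (d : ℕ → ℕ → ℤ) (w : ℝ) (z : ℂ) : ℂ :=
  (∑ n ∈ Finset.range (D * α), (H n : ℂ) * (((n : ℝ) + w : ℝ) : ℂ) ^ (-z))
  + ∑ r ∈ Finset.range D, ZBR_A m D α d w z r

lemma ZBR_c_pos {D : ℕ} (hD : 0 < D) (α : ℕ) {w : ℝ} (hw : 0 < w) (r : ℕ) :
    0 < ZBR_c D α w r := by
  have hD' : (0:ℝ) < D := Nat.cast_pos.mpr hD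
  have h1 : (0:ℝ) ≤ ((D * α : ℕ) : ℝ) := Nat.cast_nonneg _
  have h2 : (0:ℝ) ≤ (r : ℝ) := Nat.cast_nonneg _
  exact div_pos (by linarith) hD'

lemma ZBR_base_eq {D α : ℕ} (hD : 0 < D) (w : ℝ) (r q : ℕ) :
    (D : ℝ) * ((q : ℝ) + ZBR_c D α w r) = ((D * α + (q * D + r) : ℕ) : ℝ) + w := by
  have hD' : ((D:ℝ)) ≠ 0 := (Nat.cast_pos.mpr hD).ne'
  rw [ZBR_c]
  push_cast
  field_simp
  ring

lemma ZBR_d_period {m D : ℕ} {d : ℕ → ℕ → ℤ} (hper : ∀ k, k < m → ∀ n, d k (n + D) = d k n)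
    {ℓ : ℕ} (hℓ : ℓ < m) (r : ℕ) : ∀ t : ℕ, d ℓ (r + t * D) = d ℓ r := by
  intro t
  induction t with
  | zero => simp
  | succ t ih =>
      have : r + (t + 1) * D = (r + t * D) + D := by ring
      rw [this, hper ℓ hℓ, ih]

/-- Pointwise expansion of the general term over residue class `r`. -/
lemma ZBR_pointwise (H : ℕ → ℕ) (m D α : ℕ) (hD : 0 < D) (d : ℕ → ℕ → ℤ)
    (hper : ∀ k, k < m → ∀ n, d k (n + D) = d k n)
    (hH : ∀ n, α ≤ n → (H n : ℤ) = ∑ k ∈ Finset.range m, d k n * (n : ℤ) ^ k)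
    {w : ℝ} (hw : 0 < w) (z : ℂ) (r q : ℕ) :
    (H (D * α + (q * D + r)) : ℂ) * (((D * α + (q * D + r) : ℕ) : ℝ) + w : ℝ) ^ (-z) =
      ∑ ℓ ∈ Finset.range m, ∑ j ∈ Finset.range (ℓ + 1),
        ((ℓ.choose j : ℂ) * (-(w : ℂ)) ^ (ℓ - j) * (d ℓ r : ℂ)) *
          ((D * ((q : ℝ) + ZBR_c D α w r) : ℝ) : ℂ) ^ (-(z - j)) := by
  set n' : ℕ := D * α + (q * D + r) with hn'
  set x : ℂ := ((((n' : ℕ) : ℝ) + w : ℝ) : ℂ) with hx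
  have hxpos : (0:ℝ) < ((n' : ℕ) : ℝ) + w := add_pos_of_nonneg_of_pos (Nat.cast_nonneg _) hw
  have hx0 : x ≠ 0 := by rw [hx, ofReal_ne_zero]; exact hxpos.ne'
  have hαn : α ≤ n' := le_trans (Nat.le_mul_of_pos_left α hD) (Nat.le_add_right _ _)
  have hdn : ∀ ℓ, ℓ < m → d ℓ n' = d ℓ r := by
    intro ℓ hℓ
    have h : n' = r + (α + q) * D := by rw [hn']; ring
    rw [h, ZBR_d_period hper hℓ]
  have hDx : ((D * ((q : ℝ) + ZBR_c D α w r) : ℝ) : ℂ) = x := by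
    rw [hx, hn']
    exact congrArg _ (ZBR_base_eq hD w r q)
  have h1 := hH n' hαn
  clear_value x n'
  have h2 : (H n' : ℂ) = ∑ ℓ ∈ Finset.range m, (d ℓ n' : ℂ) * ((n' : ℕ) : ℂ) ^ ℓ := by
    exact_mod_cast h1
  have hHn : (H n' : ℂ) = ∑ ℓ ∈ Finset.range m, (d ℓ r : ℂ) * ((n' : ℕ) : ℂ) ^ ℓ := by
    rw [h2]
    exact Finset.sum_congr rfl fun ℓ hℓ => by rw [hdn ℓ (Finset.mem_range.mp hℓ)]
  have hnx : ((n' : ℕ) : ℂ) = x + (-(w : ℂ)) := by rw [hx]; push_cast; ring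
  have hbase : ∀ j : ℕ, ((D * ((q : ℝ) + ZBR_c D α w r) : ℝ) : ℂ) ^ (-(z - j)) =
      x ^ j * x ^ (-z) := by
    intro j
    rw [hDx, show -(z - (j:ℂ)) = (j : ℂ) + (-z) by ring, cpow_add _ _ hx0, cpow_natCast]
  rw [hHn, Finset.sum_mul]
  refine Finset.sum_congr rfl fun ℓ _ => ?_
  rw [hnx, add_pow, Finset.mul_sum, Finset.sum_mul]
  refine Finset.sum_congr rfl fun j _ => ?_
  rw [hbase j]
  ring

lemma ZBR_A_hasSum (H : ℕ → ℕ) (m D α : ℕ) (hD : 0 < D) (d : ℕ → ℕ → ℤ)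
    (hper : ∀ k, k < m → ∀ n, d k (n + D) = d k n)
    (hH : ∀ n, α ≤ n → (H n : ℤ) = ∑ k ∈ Finset.range m, d k n * (n : ℤ) ^ k)
    {w : ℝ} (hw : 0 < w) {z : ℂ} (hz : (m : ℝ) < z.re) (r : ℕ) :
    HasSum (fun q : ℕ => (H (D * α + (q * D + r)) : ℂ) *
        (((D * α + (q * D + r) : ℕ) : ℝ) + w : ℝ) ^ (-z))
      (ZBR_A m D α d w z r) := by
  have hc := ZBR_c_pos hD α hw r
  have key : HasSum (fun q : ℕ => ∑ ℓ ∈ Finset.range m, ∑ j ∈ Finset.range (ℓ + 1),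
      ((ℓ.choose j : ℂ) * (-(w : ℂ)) ^ (ℓ - j) * (d ℓ r : ℂ)) *
        ((D * ((q : ℝ) + ZBR_c D α w r) : ℝ) : ℂ) ^ (-(z - j)))
      (ZBR_A m D α d w z r) := by
    refine hasSum_sum fun ℓ hℓ => hasSum_sum fun j hj => ?_
    have hjm : (j : ℝ) + 1 ≤ (m : ℝ) := by
      have h1 : j + 1 ≤ m := le_trans (Finset.mem_range.mp hj) (Finset.mem_range.mp hℓ)
      exact_mod_cast h1
    have hre : 1 < (z - (j : ℂ)).re := by
      rw [sub_re, natCast_re]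
      linarith
    exact (ZBR_hasSum hD hc hre).mul_left _
  exact key.congr_fun fun q =>
    ZBR_pointwise H m D α hD d hper hH hw z r q

lemma ZBR_f_hasSum (H : ℕ → ℕ) (m D α : ℕ) (hD : 0 < D) (d : ℕ → ℕ → ℤ)
    (hper : ∀ k, k < m → ∀ n, d k (n + D) = d k n)
    (hH : ∀ n, α ≤ n → (H n : ℤ) = ∑ k ∈ Finset.range m, d k n * (n : ℤ) ^ k)
    {w : ℝ} (hw : 0 < w) {z : ℂ} (hz : (m : ℝ) < z.re) :
    HasSum (fun n : ℕ => (H n : ℂ) / (((n : ℝ) + w : ℝ) : ℂ) ^ z)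
      (ZBR_f H m D α d w z) := by
  set t : ℕ → ℂ := fun n => (H n : ℂ) * (((n : ℝ) + w : ℝ) : ℂ) ^ (-z) with ht
  set g : ℕ → ℕ → ℂ := fun r n => if n % D = r then t (D * α + n) else 0 with hg
  -- each residue class
  have hfiber : ∀ r ∈ Finset.range D, HasSum (g r) (ZBR_A m D α d w z r) := by
    intro r hr
    have hrD : r < D := Finset.mem_range.mp hr
    have hinj : Function.Injective (fun q : ℕ => q * D + r) := by
      intro a b hab
      simp only at hab
      exact Nat.eq_of_mul_eq_mul_right hD (by omega)
    have hvanish : ∀ n, n ∉ Set.range (fun q : ℕ => q * D + r) → g r n = 0 := by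
      intro n hn
      simp only [hg]
      refine if_neg fun hmod => hn ⟨n / D, ?_⟩
      simp only
      rw [← hmod]
      exact Nat.div_add_mod' n D
    have hcomp : (g r) ∘ (fun q : ℕ => q * D + r) = fun q : ℕ =>
        (H (D * α + (q * D + r)) : ℂ) * (((D * α + (q * D + r) : ℕ) : ℝ) + w : ℝ) ^ (-z) := by
      funext q
      simp only [hg, Function.comp, ht]
      rw [if_pos (by rw [add_comm, Nat.add_mul_mod_self_right, Nat.mod_eq_of_lt hrD])]
    rw [← hinj.hasSum_iff hvanish, hcomp]
    exact ZBR_A_hasSum H m D α hD d hper hH hw hz r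
  have hsum1 : HasSum (fun n : ℕ => ∑ r ∈ Finset.range D, g r n)
      (∑ r ∈ Finset.range D, ZBR_A m D α d w z r) := hasSum_sum hfiber
  have hsum2 : HasSum (fun n : ℕ => t (n + D * α))
      (∑ r ∈ Finset.range D, ZBR_A m D α d w z r) := by
    refine hsum1.congr_fun fun n => ?_
    have hmem : n % D ∈ Finset.range D := Finset.mem_range.mpr (Nat.mod_lt n hD)
    have hsingle : ∑ r ∈ Finset.range D, g r n = t (D * α + n) := by
      rw [Finset.sum_eq_single_of_mem (n % D) hmem (fun r _ hrn => by
        simp only [hg]; exact if_neg fun h => hrn h.symm)]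
      simp [hg]
    rw [add_comm n (D * α)]
    exact hsingle.symm
  have hsum3 : HasSum t
      ((∑ r ∈ Finset.range D, ZBR_A m D α d w z r) + ∑ i ∈ Finset.range (D * α), t i) :=
    (hasSum_nat_add_iff (D * α)).mp hsum2
  have hfinal : HasSum t (ZBR_f H m D α d w z) := by
    rw [ZBR_f, add_comm]
    exact hsum3
  refine hfinal.congr_fun fun n => ?_
  have hpos : (0:ℝ) < (n : ℝ) + w := add_pos_of_nonneg_of_pos (Nat.cast_nonneg n) hw
  have h0 : (((n : ℝ) + w : ℝ) : ℂ) ≠ 0 := by rw [ofReal_ne_zero]; exact hpos.ne'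
  rw [ht]
  simp only
  rw [cpow_neg, div_eq_mul_inv]

end ZBRmain

section ZBRfinal

lemma ZBR_A_diffAt (m D α : ℕ) (hD : 0 < D) (d : ℕ → ℕ → ℤ) {w : ℝ} (hw : 0 < w) (r : ℕ)
    {z : ℂ} (hz : ∀ j : ℕ, j < m → z ≠ (j : ℂ) + 1) :
    DifferentiableAt ℂ (fun s => ZBR_A m D α d w s r) z := by
  simp only [ZBR_A]
  refine DifferentiableAt.fun_sum fun ℓ hℓ => DifferentiableAt.fun_sum fun j hj => ?_
  refine DifferentiableAt.const_mul ?_ _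
  have hjm : j < m := lt_of_le_of_lt (Nat.lt_succ_iff.mp (Finset.mem_range.mp hj))
    (Finset.mem_range.mp hℓ)
  have hj1 : z - (j : ℂ) ≠ 1 := by
    intro h
    exact hz j hjm (by linear_combination h)
  exact (ZBR_S_diff hD (ZBR_c_pos hD α hw r) hj1).comp z (differentiableAt_id.sub_const _)

lemma ZBR_f_diffAt (H : ℕ → ℕ) (m D α : ℕ) (hD : 0 < D) (d : ℕ → ℕ → ℤ) {w : ℝ} (hw : 0 < w)
    {z : ℂ} (hz : ∀ j : ℕ, j < m → z ≠ (j : ℂ) + 1) :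
    DifferentiableAt ℂ (ZBR_f H m D α d w) z := by
  have h1 : DifferentiableAt ℂ (fun s : ℂ =>
      ∑ n ∈ Finset.range (D * α), (H n : ℂ) * (((n : ℝ) + w : ℝ) : ℂ) ^ (-s)) z := by
    refine DifferentiableAt.fun_sum fun n _ => DifferentiableAt.const_mul ?_ _
    have hb : (((n : ℝ) + w : ℝ) : ℂ) ≠ 0 := by
      rw [ofReal_ne_zero]
      exact (add_pos_of_nonneg_of_pos (Nat.cast_nonneg n) hw).ne'
    exact (ZBR_diff_cpow hb differentiable_neg) z
  have h2 : DifferentiableAt ℂ (fun s : ℂ => ∑ r ∈ Finset.range D, ZBR_A m D α d w s r) z :=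
    DifferentiableAt.fun_sum fun r _ => ZBR_A_diffAt m D α hD d hw r hz
  exact h1.add h2

lemma ZBR_A_residue (m D α : ℕ) (hD : 0 < D) (d : ℕ → ℕ → ℤ) {w : ℝ} (hw : 0 < w) (r : ℕ)
    {j₀ : ℕ} (hj₀ : j₀ < m) :
    Tendsto (fun s => (s - ((j₀ : ℂ) + 1)) * ZBR_A m D α d w s r)
      (nhdsWithin ((j₀ : ℂ) + 1) {((j₀ : ℂ) + 1)}ᶜ)
      (nhds (∑ ℓ ∈ Finset.range m, if j₀ ∈ Finset.range (ℓ + 1) then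
        ((ℓ.choose j₀ : ℂ) * (-(w : ℂ)) ^ (ℓ - j₀) * (d ℓ r : ℂ)) * (D : ℂ)⁻¹ else 0)) := by
  have hc := ZBR_c_pos hD α hw r
  set z₀ : ℂ := (j₀ : ℂ) + 1 with hz₀
  have key : ∀ ℓ ∈ Finset.range m, ∀ j ∈ Finset.range (ℓ + 1),
      Tendsto (fun s => (s - z₀) * (((ℓ.choose j : ℂ) * (-(w : ℂ)) ^ (ℓ - j) * (d ℓ r : ℂ)) *
          ZBR_S D (ZBR_c D α w r) (s - j)))
        (nhdsWithin z₀ {z₀}ᶜ)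
        (nhds (if j = j₀ then
          ((ℓ.choose j : ℂ) * (-(w : ℂ)) ^ (ℓ - j) * (d ℓ r : ℂ)) * (D : ℂ)⁻¹ else 0)) := by
    intro ℓ hℓ j hj
    by_cases hjj : j = j₀
    · subst hjj
      rw [if_pos rfl]
      have hφ : Tendsto (fun s : ℂ => s - (j : ℂ)) (nhdsWithin z₀ {z₀}ᶜ)
          (nhdsWithin 1 {(1 : ℂ)}ᶜ) := by
        refine tendsto_nhdsWithin_of_tendsto_nhds_of_eventually_within _ ?_ ?_
        · have h1 : Tendsto (fun s : ℂ => s - (j : ℂ)) (nhds z₀) (nhds 1) := by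
            have h := ((continuous_id (X := ℂ)).sub (continuous_const (y := (j : ℂ)))).tendsto z₀
            simpa [hz₀, Pi.sub_def] using h
          exact h1.mono_left nhdsWithin_le_nhds
        · filter_upwards [self_mem_nhdsWithin] with s hs
          simp only [Set.mem_compl_iff, Set.mem_singleton_iff] at hs ⊢
          intro h
          exact hs (by rw [hz₀]; linear_combination h)
      have hres := (ZBR_S_residue hD hc).comp hφ
      have := hres.const_mul ((ℓ.choose j : ℂ) * (-(w : ℂ)) ^ (ℓ - j) * (d ℓ r : ℂ))
      refine this.congr fun s => ?_
      simp only [Function.comp]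
      rw [hz₀]
      ring
    · rw [if_neg hjj]
      have hzj : z₀ - (j : ℂ) ≠ 1 := by
        intro h
        apply hjj
        have : (j : ℂ) = (j₀ : ℂ) := by rw [hz₀] at h; linear_combination -h
        exact_mod_cast this
      have hcont : ContinuousAt (fun s : ℂ => ((ℓ.choose j : ℂ) * (-(w : ℂ)) ^ (ℓ - j) *
          (d ℓ r : ℂ)) * ZBR_S D (ZBR_c D α w r) (s - j)) z₀ := by
        refine DifferentiableAt.continuousAt (𝕜 := ℂ) ?_
        exact DifferentiableAt.const_mul
          ((ZBR_S_diff hD hc hzj).comp z₀ (differentiableAt_id.sub_const _)) _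
      have hsub : Tendsto (fun s : ℂ => s - z₀) (nhds z₀) (nhds 0) := by
        have h := ((continuous_id (X := ℂ)).sub (continuous_const (y := z₀))).tendsto z₀
        simpa [Pi.sub_def] using h
      have h := hsub.mul hcont.tendsto
      rw [zero_mul] at h
      exact h.mono_left nhdsWithin_le_nhds
  have hsum := tendsto_finset_sum (Finset.range m) (fun ℓ hℓ =>
    tendsto_finset_sum (Finset.range (ℓ + 1)) (key ℓ hℓ))
  have hval : ∀ ℓ ∈ Finset.range m,
      (∑ j ∈ Finset.range (ℓ + 1), if j = j₀ then
        ((ℓ.choose j : ℂ) * (-(w : ℂ)) ^ (ℓ - j) * (d ℓ r : ℂ)) * (D : ℂ)⁻¹ else 0)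
      = if j₀ ∈ Finset.range (ℓ + 1) then
        ((ℓ.choose j₀ : ℂ) * (-(w : ℂ)) ^ (ℓ - j₀) * (d ℓ r : ℂ)) * (D : ℂ)⁻¹ else 0 :=
    fun ℓ _ => Finset.sum_ite_eq' _ _ _
  rw [show (∑ ℓ ∈ Finset.range m, if j₀ ∈ Finset.range (ℓ + 1) then
      ((ℓ.choose j₀ : ℂ) * (-(w : ℂ)) ^ (ℓ - j₀) * (d ℓ r : ℂ)) * (D : ℂ)⁻¹ else 0)
      = ∑ ℓ ∈ Finset.range m, ∑ j ∈ Finset.range (ℓ + 1), if j = j₀ then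
        ((ℓ.choose j : ℂ) * (-(w : ℂ)) ^ (ℓ - j) * (d ℓ r : ℂ)) * (D : ℂ)⁻¹ else 0
    from (Finset.sum_congr rfl hval).symm]
  refine hsum.congr fun s => ?_
  simp only [ZBR_A, Finset.mul_sum]

lemma ZBR_f_residue (H : ℕ → ℕ) (m D α : ℕ) (hD : 0 < D) (d : ℕ → ℕ → ℤ) {w : ℝ} (hw : 0 < w)
    {j₀ : ℕ} (hj₀ : j₀ < m) :
    Tendsto (fun s => (s - ((j₀ : ℂ) + 1)) * ZBR_f H m D α d w s)
      (nhdsWithin ((j₀ : ℂ) + 1) {((j₀ : ℂ) + 1)}ᶜ)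
      (nhds (∑ r ∈ Finset.range D, ∑ ℓ ∈ Finset.range m, if j₀ ∈ Finset.range (ℓ + 1) then
        ((ℓ.choose j₀ : ℂ) * (-(w : ℂ)) ^ (ℓ - j₀) * (d ℓ r : ℂ)) * (D : ℂ)⁻¹ else 0)) := by
  set z₀ : ℂ := (j₀ : ℂ) + 1 with hz₀
  have h0 : Tendsto (fun s : ℂ => (s - z₀) *
      ∑ n ∈ Finset.range (D * α), (H n : ℂ) * (((n : ℝ) + w : ℝ) : ℂ) ^ (-s))
      (nhdsWithin z₀ {z₀}ᶜ) (nhds 0) := by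
    have hcont : ContinuousAt (fun s : ℂ =>
        ∑ n ∈ Finset.range (D * α), (H n : ℂ) * (((n : ℝ) + w : ℝ) : ℂ) ^ (-s)) z₀ := by
      refine DifferentiableAt.continuousAt (𝕜 := ℂ) ?_
      refine DifferentiableAt.fun_sum fun n _ => DifferentiableAt.const_mul ?_ _
      have hb : (((n : ℝ) + w : ℝ) : ℂ) ≠ 0 := by
        rw [ofReal_ne_zero]
        exact (add_pos_of_nonneg_of_pos (Nat.cast_nonneg n) hw).ne'
      exact (ZBR_diff_cpow hb differentiable_neg) z₀
    have hsub : Tendsto (fun s : ℂ => s - z₀) (nhds z₀) (nhds 0) := by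
      have h := ((continuous_id (X := ℂ)).sub (continuous_const (y := z₀))).tendsto z₀
      simpa [Pi.sub_def] using h
    have h := hsub.mul hcont.tendsto
    rw [zero_mul] at h
    exact h.mono_left nhdsWithin_le_nhds
  have h1 := tendsto_finset_sum (Finset.range D) (fun r _ =>
    ZBR_A_residue m D α hD d hw r hj₀)
  have h2 := h0.add h1
  rw [zero_add] at h2
  refine h2.congr fun s => ?_
  simp only [ZBR_f, Finset.mul_sum, mul_add, hz₀]

end ZBRfinal

/-- Residue formula of Theorem 1.1: under the quasi-polynomial hypotheses on `H`, the residue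
of the meromorphic continuation of `ζ(z) = ∑_{n≥0} H(n)/(n+w)^z` at `z = k+1`, for
`0 ≤ k ≤ m-1`, equals `(1/D)·∑_{ℓ=k}^{m-1} C(ℓ,k)(-w)^{ℓ-k} ∑_{j=0}^{D-1} d_ℓ(j)`. -/
theorem zeta_barnes_residue (H : ℕ → ℕ) (m D α : ℕ) (hm : 1 ≤ m) (hD : 1 ≤ D)
    (d : ℕ → ℕ → ℤ) (hper : ∀ k, k < m → ∀ n, d k (n + D) = d k n)
    (hH : ∀ n, α ≤ n → (H n : ℤ) = ∑ k ∈ Finset.range m, d k n * (n : ℤ) ^ k)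
    (w : ℝ) (hw : 0 < w) (k : ℕ) (hk : k < m) :
    ∃ f : ℂ → ℂ,
      (∀ z : ℂ, (m : ℝ) < z.re →
          f z = ∑' n : ℕ, (H n : ℂ) / (((n : ℝ) + w : ℝ) : ℂ) ^ z) ∧
      (∀ z : ℂ, z ∉ {z : ℂ | ∃ j : ℕ, 1 ≤ j ∧ j ≤ m ∧ z = (j : ℂ)} → AnalyticAt ℂ f z) ∧
      (∀ z ∈ {z : ℂ | ∃ j : ℕ, 1 ≤ j ∧ j ≤ m ∧ z = (j : ℂ)},
          ∃ c : ℂ, Tendsto (fun s => (s - z) * f s) (nhdsWithin z {z}ᶜ) (nhds c)) ∧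
      Tendsto (fun s => (s - ((k : ℂ) + 1)) * f s) (nhdsWithin ((k : ℂ) + 1) {((k : ℂ) + 1)}ᶜ)
        (nhds ((1 / (D : ℂ)) * ∑ ℓ ∈ Finset.Icc k (m - 1),
          (ℓ.choose k : ℂ) * (-(w : ℂ)) ^ (ℓ - k) * ∑ j ∈ Finset.range D, (d ℓ j : ℂ))) := by

  have hD0 : 0 < D := hD
  refine ⟨ZBR_f H m D α d w, ?_, ?_, ?_, ?_⟩
  · intro z hz
    exact (ZBR_f_hasSum H m D α hD0 d hper hH hw hz).tsum_eq.symm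
  · intro z hz
    -- the pole set is a finite, hence closed, set
    have hsetP : {z : ℂ | ∃ j : ℕ, 1 ≤ j ∧ j ≤ m ∧ z = (j : ℂ)} =
        ↑((Finset.Icc 1 m).image fun j : ℕ => (j : ℂ)) := by
      ext y
      simp only [Set.mem_setOf_eq, Finset.coe_image, Set.mem_image, Finset.mem_coe,
        Finset.mem_Icc]
      constructor
      · rintro ⟨j, h1, h2, rfl⟩; exact ⟨j, ⟨h1, h2⟩, rfl⟩
      · rintro ⟨j, ⟨h1, h2⟩, rfl⟩; exact ⟨j, h1, h2, rfl⟩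
    have hopen : IsOpen ({z : ℂ | ∃ j : ℕ, 1 ≤ j ∧ j ≤ m ∧ z = (j : ℂ)})ᶜ := by
      rw [hsetP]
      exact (Finset.finite_toSet _).isClosed.isOpen_compl
    refine DifferentiableOn.analyticAt (s := ({z : ℂ | ∃ j : ℕ, 1 ≤ j ∧ j ≤ m ∧ z = (j : ℂ)})ᶜ)
      ?_ (hopen.mem_nhds hz)
    intro y hy
    refine (ZBR_f_diffAt H m D α hD0 d hw ?_).differentiableWithinAt
    intro j hj hyj
    exact hy ⟨j + 1, le_add_self, by omega, by push_cast [hyj]; ring⟩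
  · rintro z ⟨j, hj1, hjm, rfl⟩
    have hj₀ : j - 1 < m := by omega
    have hcast : ((j - 1 : ℕ) : ℂ) + 1 = (j : ℂ) := by
      have : j - 1 + 1 = j := by omega
      rw [← this]
      push_cast
      ring
    rw [← hcast]
    exact ⟨_, ZBR_f_residue H m D α hD0 d hw hj₀⟩
  · have hres := ZBR_f_residue H m D α hD0 d hw hk
    have hval : (∑ r ∈ Finset.range D, ∑ ℓ ∈ Finset.range m, if k ∈ Finset.range (ℓ + 1) then
        ((ℓ.choose k : ℂ) * (-(w : ℂ)) ^ (ℓ - k) * (d ℓ r : ℂ)) * (D : ℂ)⁻¹ else 0)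
        = (1 / (D : ℂ)) * ∑ ℓ ∈ Finset.Icc k (m - 1),
          (ℓ.choose k : ℂ) * (-(w : ℂ)) ^ (ℓ - k) * ∑ j ∈ Finset.range D, (d ℓ j : ℂ) := by
      rw [Finset.sum_comm]
      have step1 : ∀ ℓ ∈ Finset.range m,
          (∑ r ∈ Finset.range D, if k ∈ Finset.range (ℓ + 1) then
            ((ℓ.choose k : ℂ) * (-(w : ℂ)) ^ (ℓ - k) * (d ℓ r : ℂ)) * (D : ℂ)⁻¹ else 0)
          = if k ≤ ℓ then (1 / (D : ℂ)) *
              ((ℓ.choose k : ℂ) * (-(w : ℂ)) ^ (ℓ - k) * ∑ r ∈ Finset.range D, (d ℓ r : ℂ))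
            else 0 := by
        intro ℓ _
        by_cases h : k ≤ ℓ
        · rw [if_pos h]
          rw [Finset.sum_congr rfl (fun r _ => if_pos (Finset.mem_range.mpr (by omega)))]
          rw [Finset.mul_sum, Finset.mul_sum]
          refine Finset.sum_congr rfl fun r _ => ?_
          rw [one_div]
          ring
        · rw [if_neg h]
          refine Finset.sum_eq_zero fun r _ => ?_
          rw [if_neg (by simpa [Nat.lt_succ_iff] using h)]
      rw [Finset.sum_congr rfl step1, ← Finset.sum_filter]
      rw [show (Finset.range m).filter (fun ℓ => k ≤ ℓ) = Finset.Icc k (m - 1) by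
        ext ℓ; simp only [Finset.mem_filter, Finset.mem_range, Finset.mem_Icc]; omega]
      rw [Finset.mul_sum]
    rw [hval] at hres
    exact hres
end

section
/- Let H : ℕ → ℕ satisfy H(n) = d_{m-1}n^{m-1} + ⋯ + d₁n + d₀ for all n ≥ α, with m ≥ 1 and d_{m-1} ≠ 0. Then the residue at z = m of the meromorphic continuation of ζ_H(z) := ∑_{n=1}^∞ H(n)/n^z equals d_{m-1}. Consequently, if H is the Hilbert function of a module of dimension m and multiplicity e, so that d_{m-1} = e/(m-1)!, then e = (m-1)! · Res_{z=m} ζ_H(z). -/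
open Complex Filter

private lemma analyticAt_zeta' {w : ℂ} (hw : w ≠ 1) : AnalyticAt ℂ riemannZeta w := by
  refine DifferentiableOn.analyticAt (s := {(1 : ℂ)}ᶜ)
    (fun x hx => (differentiableAt_riemannZeta hx).differentiableWithinAt) ?_
  exact isOpen_compl_singleton.mem_nhds hw

/-- Proposition 3.2 / Corollary 3.3: if `H(n) = d_{m-1}n^{m-1} + ⋯ + d₀` for `n ≥ α` with
`d_{m-1} ≠ 0`, then the meromorphic continuation of `ζ_H(z) = ∑_{n≥1} H(n)/n^z` has residue
`d_{m-1}` at `z = m`; consequently if `d_{m-1} = e/(m-1)!` then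
`e = (m-1)!·Res_{z=m} ζ_H(z)`. -/
theorem multiplicity_eq_residue (H : ℕ → ℕ) (m α : ℕ) (hm : 1 ≤ m) (d : ℕ → ℝ)
    (hd : d (m - 1) ≠ 0)
    (hH : ∀ n, α ≤ n → (H n : ℝ) = ∑ k ∈ Finset.range m, d k * (n : ℝ) ^ k) :
    ∃ f : ℂ → ℂ,
      (∀ z : ℂ, (m : ℝ) < z.re →
          f z = ∑' n : ℕ, (H (n + 1) : ℂ) / (((n : ℕ) + 1 : ℂ)) ^ z) ∧
      (∀ z : ℂ, z ∉ {z : ℂ | ∃ j : ℕ, 1 ≤ j ∧ j ≤ m ∧ z = (j : ℂ)} → AnalyticAt ℂ f z) ∧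
      (∀ z ∈ {z : ℂ | ∃ j : ℕ, 1 ≤ j ∧ j ≤ m ∧ z = (j : ℂ)},
          ∃ c : ℂ, Tendsto (fun s => (s - z) * f s) (nhdsWithin z {z}ᶜ) (nhds c)) ∧
      Tendsto (fun s => (s - (m : ℂ)) * f s) (nhdsWithin (m : ℂ) {(m : ℂ)}ᶜ)
        (nhds ((d (m - 1) : ℂ))) ∧
      (∀ e : ℝ, d (m - 1) = e / (Nat.factorial (m - 1)) →
          Tendsto (fun s => ((Nat.factorial (m - 1) : ℂ)) * ((s - (m : ℂ)) * f s))
            (nhdsWithin (m : ℂ) {(m : ℂ)}ᶜ) (nhds (e : ℂ))) := by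
  classical
  -- the "correction" term, vanishing for `n + 1 ≥ α`
  set corr : ℕ → ℂ := fun n =>
    (H (n + 1) : ℂ) - ∑ k ∈ Finset.range m, (d k : ℂ) * ((n : ℂ) + 1) ^ k with hcorr
  have hcorr0 : ∀ n, α ≤ n + 1 → corr n = 0 := by
    intro n hn
    have h := hH (n + 1) hn
    simp only [hcorr, sub_eq_zero]
    have h2 : ((H (n + 1) : ℝ) : ℂ) =
        ((∑ k ∈ Finset.range m, d k * ((n : ℝ) + 1) ^ k : ℝ) : ℂ) := by
      rw [h]; push_cast; ring_nf
    push_cast at h2 ⊢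
    convert h2 using 2
  set A : ℂ → ℂ := fun z => ∑ n ∈ Finset.range α, corr n * ((n : ℂ) + 1) ^ (-z) with hA
  set f : ℂ → ℂ := fun z =>
    A z + ∑ k ∈ Finset.range m, (d k : ℂ) * riemannZeta (z - (k : ℂ)) with hf
  have hne : ∀ n : ℕ, ((n : ℂ) + 1) ≠ 0 := by
    intro n h
    have := congrArg Complex.re h
    simp only [add_re, natCast_re, one_re, zero_re] at this
    have h0 : (0:ℝ) ≤ (n:ℝ) := Nat.cast_nonneg n
    linarith
  -- analyticity of A everywhere
  have hAan : ∀ z : ℂ, AnalyticAt ℂ A z := by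
    intro z
    refine Finset.analyticAt_fun_sum _ (fun n _ => ?_)
    refine analyticAt_const.mul ?_
    refine AnalyticAt.cpow analyticAt_const (analyticAt_id.neg) ?_
    rw [Complex.mem_slitPlane_iff]
    left
    simp only [add_re, natCast_re, one_re]
    positivity
  -- the key residue computation
  have hres : ∀ j : ℕ, 1 ≤ j → j ≤ m →
      Tendsto (fun s => (s - (j : ℂ)) * f s) (nhdsWithin (j : ℂ) {(j : ℂ)}ᶜ)
        (nhds ((d (j - 1) : ℂ))) := by
    intro j hj1 hjm
    have hfeq : (fun s => (s - (j : ℂ)) * f s) = fun s =>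
        (s - (j : ℂ)) * A s +
          ∑ k ∈ Finset.range m, (d k : ℂ) * ((s - (j : ℂ)) * riemannZeta (s - (k : ℂ))) := by
      funext s
      simp only [hf, mul_add, Finset.mul_sum]
      congr 1
      refine Finset.sum_congr rfl fun k _ => ?_
      ring
    rw [hfeq]
    have hAlim : Tendsto (fun s => (s - (j : ℂ)) * A s)
        (nhdsWithin (j : ℂ) {(j : ℂ)}ᶜ) (nhds 0) := by
      have : Tendsto (fun s => (s - (j : ℂ)) * A s) (nhds (j : ℂ))
          (nhds (((j : ℂ) - (j : ℂ)) * A (j : ℂ))) :=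
        ((continuousAt_id.sub continuousAt_const).mul (hAan _).continuousAt)
      simpa using this.mono_left nhdsWithin_le_nhds
    have hterm : ∀ k ∈ Finset.range m,
        Tendsto (fun s => (d k : ℂ) * ((s - (j : ℂ)) * riemannZeta (s - (k : ℂ))))
          (nhdsWithin (j : ℂ) {(j : ℂ)}ᶜ)
          (nhds (if k = j - 1 then (d k : ℂ) else 0)) := by
      intro k hk
      by_cases hkj : k = j - 1
      · subst hkj
        have hjk : j = (j - 1) + 1 := by omega
        have hcast : (j : ℂ) = ((j - 1 : ℕ) : ℂ) + 1 := by
          rw [hjk]; push_cast; ring_nf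
        rw [if_pos rfl]
        have hsub1 : (j : ℂ) - ((j - 1 : ℕ) : ℂ) = 1 := by rw [hcast]; ring
        have hmap : Tendsto (fun s => s - ((j - 1 : ℕ) : ℂ))
            (nhdsWithin (j : ℂ) {(j : ℂ)}ᶜ) (nhdsWithin 1 {(1 : ℂ)}ᶜ) := by
          refine tendsto_nhdsWithin_of_tendsto_nhds_of_eventually_within _ ?_ ?_
          · have h3 : Tendsto (fun s : ℂ => s - ((j - 1 : ℕ) : ℂ)) (nhds (j : ℂ))
                (nhds ((j : ℂ) - ((j - 1 : ℕ) : ℂ))) :=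
              (continuousAt_id.sub continuousAt_const)
            rw [hsub1] at h3
            exact h3.mono_left nhdsWithin_le_nhds
          · filter_upwards [self_mem_nhdsWithin] with s hs
            simp only [Set.mem_compl_iff, Set.mem_singleton_iff] at hs ⊢
            intro hcontra
            apply hs
            rw [hcast]
            linear_combination hcontra
        have := riemannZeta_residue_one.comp hmap
        have h2 : Tendsto (fun s => (s - (j : ℂ)) * riemannZeta (s - ((j - 1 : ℕ) : ℂ)))
            (nhdsWithin (j : ℂ) {(j : ℂ)}ᶜ) (nhds 1) := by
          refine this.congr fun s => ?_
          simp only [Function.comp]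
          congr 1
          rw [hcast]; ring
        simpa using h2.const_mul ((d (j - 1) : ℂ))
      · simp only [if_neg hkj]
        have hne1 : (j : ℂ) - (k : ℂ) ≠ 1 := by
          intro h
          have : (j : ℂ) = ((k + 1 : ℕ) : ℂ) := by push_cast; linear_combination h
          have := Nat.cast_injective (R := ℂ) this
          omega
        have hcont : ContinuousAt (fun s : ℂ => riemannZeta (s - (k : ℂ))) (j : ℂ) := by
          have h4 := ContinuousAt.comp (g := riemannZeta) (f := fun s : ℂ => s - (k : ℂ))
            (x := (j : ℂ)) ((differentiableAt_riemannZeta hne1).continuousAt)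
            (continuousAt_id.sub continuousAt_const)
          exact h4
        have : Tendsto (fun s => (s - (j : ℂ)) * riemannZeta (s - (k : ℂ)))
            (nhds (j : ℂ)) (nhds (((j : ℂ) - (j : ℂ)) * riemannZeta ((j : ℂ) - (k : ℂ)))) :=
          (continuousAt_id.sub continuousAt_const).mul hcont
        have h0 : Tendsto (fun s => (s - (j : ℂ)) * riemannZeta (s - (k : ℂ)))
            (nhdsWithin (j : ℂ) {(j : ℂ)}ᶜ) (nhds 0) := by
          simpa using this.mono_left nhdsWithin_le_nhds
        simpa using h0.const_mul ((d k : ℂ))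
    have hsumlim := tendsto_finset_sum (Finset.range m) hterm
    have htotal := hAlim.add hsumlim
    rw [zero_add] at htotal
    have hval : (∑ k ∈ Finset.range m, if k = j - 1 then (d k : ℂ) else 0) = (d (j - 1) : ℂ) := by
      rw [Finset.sum_ite_eq' (Finset.range m) (j - 1) (fun k => (d k : ℂ))]
      rw [if_pos (Finset.mem_range.mpr (by omega))]
    rwa [hval] at htotal
  refine ⟨f, ?_, ?_, ?_, hres m hm le_rfl, ?_⟩
  · -- agreement with the Dirichlet series for `re z > m`
    intro z hz
    have hsum : ∀ k ∈ Finset.range m,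
        Summable (fun n : ℕ => 1 / ((n : ℂ) + 1) ^ (z - (k : ℂ))) := by
      intro k hk
      have h1 : 1 < (z - (k : ℂ)).re := by
        simp only [sub_re, natCast_re]
        have : (k : ℝ) + 1 ≤ (m : ℝ) := by
          have : k + 1 ≤ m := Finset.mem_range.mp hk
          exact_mod_cast this
        linarith
      have := (summable_nat_add_iff (f := fun n : ℕ => 1 / (n : ℂ) ^ (z - (k : ℂ))) 1).mpr
        (Complex.summable_one_div_nat_cpow.mpr h1)
      refine this.congr (fun n => ?_)
      push_cast
      ring_nf
    have hsumF : ∀ k ∈ Finset.range m,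
        Summable (fun n : ℕ => (d k : ℂ) * (1 / ((n : ℂ) + 1) ^ (z - (k : ℂ)))) :=
      fun k hk => (hsum k hk).mul_left _
    have hsumG : Summable (fun n : ℕ => corr n * ((n : ℂ) + 1) ^ (-z)) := by
      refine summable_of_ne_finset_zero (s := Finset.range α) (fun n hn => ?_)
      have : α ≤ n + 1 := by
        have := Finset.mem_range.not.mp hn
        omega
      rw [hcorr0 n this, zero_mul]
    -- pointwise identity
    have hpt : ∀ n : ℕ, (H (n + 1) : ℂ) / (((n : ℕ) + 1 : ℂ)) ^ z =
        corr n * ((n : ℂ) + 1) ^ (-z) +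
          ∑ k ∈ Finset.range m, (d k : ℂ) * (1 / ((n : ℂ) + 1) ^ (z - (k : ℂ))) := by
      intro n
      have hzne : ((n : ℂ) + 1) ^ z ≠ 0 := by
        simp [Complex.cpow_eq_zero_iff, hne n]
      have hsum2 : ∑ k ∈ Finset.range m, (d k : ℂ) * (1 / ((n : ℂ) + 1) ^ (z - (k : ℂ))) =
          (∑ k ∈ Finset.range m, (d k : ℂ) * ((n : ℂ) + 1) ^ k) / ((n : ℂ) + 1) ^ z := by
        rw [Finset.sum_div]
        refine Finset.sum_congr rfl fun k _ => ?_
        rw [Complex.cpow_sub _ _ (hne n), Complex.cpow_natCast]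
        have hkne : ((n : ℂ) + 1) ^ k ≠ 0 := pow_ne_zero _ (hne n)
        field_simp
      rw [hsum2, hcorr, Complex.cpow_neg]
      field_simp
      try ring
    rw [tsum_congr hpt, Summable.tsum_add hsumG (summable_sum hsumF),
      Summable.tsum_finsetSum (f := fun k (n : ℕ) => (d k : ℂ) * (1 / ((n : ℂ) + 1) ^ (z - (k : ℂ)))) hsumF]
    have h1 : ∑' n : ℕ, corr n * ((n : ℂ) + 1) ^ (-z) = A z := by
      refine tsum_eq_sum (fun n hn => ?_)
      have : α ≤ n + 1 := by
        have := Finset.mem_range.not.mp hn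
        omega
      rw [hcorr0 n this, zero_mul]
    have h2 : ∀ k ∈ Finset.range m,
        ∑' n : ℕ, (d k : ℂ) * (1 / ((n : ℂ) + 1) ^ (z - (k : ℂ))) =
          (d k : ℂ) * riemannZeta (z - (k : ℂ)) := by
      intro k hk
      have hre : 1 < (z - (k : ℂ)).re := by
        simp only [sub_re, natCast_re]
        have : (k : ℝ) + 1 ≤ (m : ℝ) := by
          have : k + 1 ≤ m := Finset.mem_range.mp hk
          exact_mod_cast this
        linarith
      rw [zeta_eq_tsum_one_div_nat_add_one_cpow hre, ← tsum_mul_left]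
    rw [h1, Finset.sum_congr rfl h2]
  · -- analyticity away from the poles
    intro z hz
    refine (hAan z).add ?_
    refine Finset.analyticAt_fun_sum _ (fun k hk => ?_)
    refine analyticAt_const.mul ?_
    have hne1 : z - (k : ℂ) ≠ 1 := by
      intro h
      apply hz
      refine ⟨k + 1, le_add_self, Finset.mem_range.mp hk, ?_⟩
      push_cast
      linear_combination h
    have h4 := AnalyticAt.comp (g := riemannZeta) (f := fun s : ℂ => s - (k : ℂ))
      (x := z) (analyticAt_zeta' hne1) (analyticAt_id.sub analyticAt_const)
    exact h4
  · -- existence of all residues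
    rintro z ⟨j, hj1, hjm, rfl⟩
    exact ⟨_, hres j hj1 hjm⟩
  · -- the multiplicity formula
    intro e he
    have hlim := (hres m hm le_rfl).const_mul ((Nat.factorial (m - 1) : ℂ))
    have hval : (Nat.factorial (m - 1) : ℂ) * (d (m - 1) : ℂ) = (e : ℂ) := by
      have hfac : (Nat.factorial (m - 1) : ℝ) ≠ 0 := by
        exact_mod_cast (Nat.factorial_pos (m - 1)).ne'
      have : (Nat.factorial (m - 1) : ℝ) * d (m - 1) = e := by
        rw [he]; field_simp
      exact_mod_cast congrArg (Complex.ofReal) this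
    rwa [hval] at hlim
end

section
/- Let H : ℕ → ℕ be eventually polynomial of degree m-1 with leading coefficient d_{m-1}, and define H₁(n) = ∑_{j=0}^n H(j). Then H₁ is eventually polynomial of degree m with leading coefficient d_{m-1}/m. -/
open Polynomial Finset

private lemma g_step (k : ℕ) (x : ℝ) :
    ∏ i ∈ range (k + 1), (x + 1 - i) =
      ∏ i ∈ range (k + 1), (x - i) + (k + 1) * ∏ i ∈ range k, (x - i) := by
  have h1 : ∏ i ∈ range (k + 1), (x + 1 - (i : ℝ)) =
      (∏ i ∈ range k, (x - i)) * (x + 1) := by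
    rw [Finset.prod_range_succ']
    congr 1
    · exact Finset.prod_congr rfl fun i _ => by push_cast; ring
    · norm_num
  have h2 : ∏ i ∈ range (k + 1), (x - (i : ℝ)) =
      (∏ i ∈ range k, (x - i)) * (x - k) := Finset.prod_range_succ _ _
  rw [h1, h2]; ring

private lemma g_sum (k : ℕ) (hk : 1 ≤ k) (n : ℕ) :
    ∏ i ∈ range (k + 1), ((n : ℝ) + 1 - i) =
      (k + 1) * ∑ j ∈ range (n + 1), ∏ i ∈ range k, ((j : ℝ) - i) := by
  induction n with
  | zero =>
      rw [Finset.sum_range_one,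
        Finset.prod_eq_zero (Finset.mem_range.mpr (by omega : 1 < k + 1)) (by norm_num),
        Finset.prod_eq_zero (Finset.mem_range.mpr (by omega : 0 < k)) (by norm_num)]
      ring
  | succ n ih =>
      rw [Finset.sum_range_succ, mul_add, ← ih]
      have h := g_step k ((n : ℝ) + 1)
      push_cast at h ih ⊢
      linarith [h]

private lemma monic_prod_lin (k : ℕ) (a : ℕ → ℝ) :
    (∏ i ∈ range k, (X + C (a i))).Monic ∧
    (∏ i ∈ range k, (X + C (a i))).natDegree = k := by
  have hm : ∀ i ∈ range k, (X + C (a i)).Monic := fun i _ => monic_X_add_C _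
  refine ⟨monic_prod_of_monic _ _ hm, ?_⟩
  rw [natDegree_prod_of_monic _ _ hm]
  simp [natDegree_X_add_C]

private lemma key (p : ℕ) : ∀ P : Polynomial ℝ, P.natDegree ≤ p →
    ∃ S : Polynomial ℝ, S.natDegree ≤ p + 1 ∧ S.coeff (p + 1) = P.coeff p / (p + 1) ∧
      ∀ n : ℕ, S.eval (n : ℝ) = ∑ j ∈ range (n + 1), P.eval (j : ℝ) := by
  induction p with
  | zero =>
      intro P hP
      have hPC : P = C (P.coeff 0) := Polynomial.eq_C_of_natDegree_le_zero hP
      refine ⟨C (P.coeff 0) * X + C (P.coeff 0), natDegree_linear_le, ?_, ?_⟩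
      · rw [coeff_add, coeff_C_mul, coeff_X_one, coeff_C]
        norm_num
      · intro n
        rw [hPC]
        simp only [eval_add, eval_mul, eval_C, eval_X, coeff_C_zero, Finset.sum_const,
          Finset.card_range, nsmul_eq_mul]
        push_cast
        ring
  | succ p ih =>
      intro P hP
      set c := P.coeff (p + 1) with hc
      set G : Polynomial ℝ := ∏ i ∈ range (p + 1), (X + C (-(i : ℝ))) with hG
      obtain ⟨hGmon, hGdeg⟩ := monic_prod_lin (p + 1) (fun i => -(i : ℝ))
      have hGcoeff : G.coeff (p + 1) = 1 := by
        have := hGmon.leadingCoeff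
        rwa [leadingCoeff, hGdeg] at this
      have hCG : (C c * G).natDegree ≤ p + 1 := le_trans (natDegree_C_mul_le _ _) hGdeg.le
      have hP' : (P - C c * G).natDegree ≤ p := by
        rw [natDegree_le_iff_coeff_eq_zero]
        intro k hk
        rcases eq_or_lt_of_le (Nat.succ_le_of_lt hk) with h | h
        · rw [← h, coeff_sub, coeff_C_mul, hGcoeff, ← hc, mul_one, sub_self]
        · rw [coeff_sub, coeff_eq_zero_of_natDegree_lt (lt_of_le_of_lt hP h),
            coeff_eq_zero_of_natDegree_lt (lt_of_le_of_lt hCG h), sub_self]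
      obtain ⟨S', hS'deg, hS'coeff, hS'eval⟩ := ih _ hP'
      set A : Polynomial ℝ :=
        C (c / (p + 2)) * ∏ i ∈ range (p + 2), (X + C (1 - (i : ℝ))) with hA
      obtain ⟨hBmon, hBdeg⟩ := monic_prod_lin (p + 2) (fun i => 1 - (i : ℝ))
      have hAdeg : A.natDegree ≤ p + 2 := le_trans (natDegree_C_mul_le _ _) hBdeg.le
      have hAcoeff : A.coeff (p + 2) = c / (p + 2) := by
        rw [hA, coeff_C_mul]
        have := hBmon.leadingCoeff
        rw [leadingCoeff, hBdeg] at this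
        rw [this, mul_one]
      have hp2 : ((p : ℝ) + 2) ≠ 0 := by positivity
      have hAeval : ∀ n : ℕ, A.eval (n : ℝ) = ∑ j ∈ range (n + 1), (C c * G).eval (j : ℝ) := by
        intro n
        have e1 : A.eval (n : ℝ) = c / (p + 2) * ∏ i ∈ range (p + 2), ((n : ℝ) + 1 - i) := by
          rw [hA, eval_mul, eval_C, eval_prod]
          congr 1
          exact Finset.prod_congr rfl fun i _ => by simp; ring
        have e2 : ∀ j : ℕ, (C c * G).eval (j : ℝ) = c * ∏ i ∈ range (p + 1), ((j : ℝ) - i) := by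
          intro j
          rw [eval_mul, eval_C, hG, eval_prod]
          congr 1
          exact Finset.prod_congr rfl fun i _ => by simp; ring
        rw [e1, g_sum (p + 1) (by omega) n]
        rw [Finset.mul_sum, Finset.mul_sum]
        refine Finset.sum_congr rfl fun j _ => ?_
        rw [e2]
        push_cast
        field_simp
        ring
      refine ⟨S' + A, ?_, ?_, ?_⟩
      · exact le_trans (natDegree_add_le _ _) (max_le (le_trans hS'deg (by omega)) hAdeg)
      · rw [coeff_add, coeff_eq_zero_of_natDegree_lt (by omega : S'.natDegree < p + 2),
          hAcoeff, zero_add]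
        push_cast
        ring_nf
      · intro n
        rw [eval_add, hS'eval, hAeval, ← Finset.sum_add_distrib]
        refine Finset.sum_congr rfl fun j _ => ?_
        rw [eval_sub]
        ring

/-- If `H` is eventually polynomial of degree `m-1` with leading coefficient `d`, then
`H₁(n) = ∑_{j=0}^n H(j)` is eventually polynomial of degree `m` with leading coefficient
`d/m`. -/
theorem iterated_hilbert_function_degree (H : ℕ → ℕ) (m : ℕ) (hm : 1 ≤ m)
    (P : Polynomial ℝ) (hdeg : P.degree = ((m - 1 : ℕ) : WithBot ℕ))
    (α : ℕ) (hH : ∀ n, α ≤ n → (H n : ℝ) = P.eval (n : ℝ)) :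
    ∃ (Q : Polynomial ℝ) (β : ℕ), Q.degree = (m : WithBot ℕ) ∧
      Q.leadingCoeff = P.leadingCoeff / m ∧
      ∀ n, β ≤ n → ((∑ j ∈ Finset.range (n + 1), H j : ℕ) : ℝ) = Q.eval (n : ℝ) := by
  have hP0 : P ≠ 0 := fun h => by simp [h] at hdeg
  have hnd : P.natDegree = m - 1 := natDegree_eq_of_degree_eq_some hdeg
  obtain ⟨S, hSdeg, hScoeff, hSeval⟩ := key (m - 1) P hnd.le
  have hm1 : m - 1 + 1 = m := by omega
  rw [hm1] at hSdeg hScoeff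
  have hlead : P.leadingCoeff ≠ 0 := leadingCoeff_ne_zero.mpr hP0
  have hPcoeff : P.coeff (m - 1) = P.leadingCoeff := by rw [leadingCoeff, hnd]
  have hmc : ((m - 1 : ℕ) : ℝ) + 1 = (m : ℝ) := by
    exact_mod_cast congrArg (Nat.cast : ℕ → ℝ) hm1
  have hScoeff' : S.coeff m = P.leadingCoeff / m := by rw [hScoeff, hPcoeff, hmc]
  have hmR : (m : ℝ) ≠ 0 := Nat.cast_ne_zero.mpr (by omega)
  have hSm : S.coeff m ≠ 0 := by rw [hScoeff']; exact div_ne_zero hlead hmR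
  set e : ℝ := ∑ j ∈ Finset.range α, ((H j : ℝ) - P.eval (j : ℝ)) with he
  have hSdegree : S.degree = (m : WithBot ℕ) :=
    le_antisymm (natDegree_le_iff_degree_le.mp hSdeg) (le_degree_of_ne_zero hSm)
  have hQdeg : (S + C e).degree = (m : WithBot ℕ) := by
    rw [degree_add_eq_left_of_degree_lt, hSdegree]
    rw [hSdegree]
    exact lt_of_le_of_lt degree_C_le (by exact_mod_cast WithBot.coe_lt_coe.mpr (by omega : 0 < m))
  refine ⟨S + C e, α, hQdeg, ?_, ?_⟩
  · have hQnd : (S + C e).natDegree = m := natDegree_eq_of_degree_eq_some hQdeg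
    rw [leadingCoeff, hQnd, coeff_add, coeff_C, if_neg (by omega : ¬ m = 0), add_zero, hScoeff']
  · intro n hn
    have hsplit : ∀ f : ℕ → ℝ, ∑ j ∈ Finset.range (n + 1), f j =
        ∑ j ∈ Finset.range α, f j + ∑ j ∈ Finset.Ico α (n + 1), f j := by
      intro f
      rw [Finset.range_eq_Ico,
        ← Finset.sum_Ico_consecutive f (Nat.zero_le α) (by omega : α ≤ n + 1)]
      rw [Finset.range_eq_Ico]
    have hIco : ∑ j ∈ Finset.Ico α (n + 1), (H j : ℝ) =
        ∑ j ∈ Finset.Ico α (n + 1), P.eval (j : ℝ) :=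
      Finset.sum_congr rfl fun j hj => hH j (Finset.mem_Ico.mp hj).1
    rw [eval_add, eval_C, hSeval, Nat.cast_sum, hsplit (fun j => (H j : ℝ)),
      hsplit (fun j => P.eval (j : ℝ)), hIco, he, Finset.sum_sub_distrib]
    ring
end
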